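/- arXiv:1403.4301 — 3 statements merged into one kernel-verified Lean document; each statement's English description precedes it below -/
import Mathlib

section
/- Suppose a sequence of positive reals r_n satisfies r_{n+1} = r_n(1 + α/(n+x)) for all n ≥ k, where α > 0, k > 0 are fixed reals and x is a fixed real with n + x > 0 for n ≥ k. Then the sequence r_n / n^α converges to a positive limit as n → ∞. -/
/-!
Taking logarithms, `f n = log (r n) - α * log n` has increments
`log (1 + α / (n + x)) - α * log (1 + 1 / n)` from `n = k` on. Both logarithms equal their
arguments up to `O(1 / n ^ 2)`, and `α / (n + x) - α / n = O(1 / n ^ 2)`, so the increments are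
summable, `f` converges, and `r n / n ^ α = exp (f n)` tends to a positive limit.
-/

open Filter Real Asymptotics Topology

lemma Real.abs_log_one_add_sub_self_le {t : ℝ} (ht : |t| ≤ 1 / 2) :
    |log (1 + t) - t| ≤ 2 * t ^ 2 := by
  have h := abs_log_sub_add_sum_range_le (x := -t) (by rw [abs_neg]; linarith) 1
  norm_num [sub_neg_eq_add] at h
  rw [neg_add_eq_sub] at h
  refine h.trans ?_
  rw [div_le_iff₀ (by linarith)]
  nlinarith [sq_nonneg t]

lemma Real.isBigO_log_one_add_sub_self :
    (fun t : ℝ => log (1 + t) - t) =O[𝓝 0] fun t => t ^ 2 := by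
  refine IsBigO.of_bound 2 ?_
  filter_upwards [eventually_abs_sub_lt 0 (by norm_num : (0 : ℝ) < 1 / 2)] with t ht
  rw [sub_zero] at ht
  simpa [Real.norm_eq_abs] using Real.abs_log_one_add_sub_self_le ht.le

lemma isBigO_log_one_add_sub_self_of_isBigO_inv {u : ℕ → ℝ}
    (hu : u =O[atTop] fun n => (n : ℝ)⁻¹) :
    (fun n => log (1 + u n) - u n) =O[atTop] fun n => ((n : ℝ) ^ 2)⁻¹ := by
  have hu0 : Tendsto u atTop (𝓝 0) :=
    hu.trans_tendsto tendsto_inv_atTop_nhds_zero_nat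
  have hlog : (fun n => log (1 + u n) - u n) =O[atTop] fun n => u n ^ 2 :=
    Real.isBigO_log_one_add_sub_self.comp_tendsto hu0
  have hsq : (fun n => u n ^ 2) =O[atTop] fun n => ((n : ℝ) ^ 2)⁻¹ := by
    simpa only [inv_pow] using hu.pow 2
  exact hlog.trans hsq

lemma isBigO_inv_add_const (x : ℝ) :
    (fun n : ℕ => ((n : ℝ) + x)⁻¹) =O[atTop] fun n => (n : ℝ)⁻¹ := by
  refine IsBigO.of_bound 2 ?_
  filter_upwards [eventually_gt_atTop 0, eventually_ge_atTop ⌈2 * |x|⌉₊] with n hn hnx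
  have hn : (0 : ℝ) < n := by exact_mod_cast hn
  have hx : 2 * |x| ≤ n := (Nat.le_ceil _).trans (by exact_mod_cast hnx)
  have hnx : (n : ℝ) / 2 ≤ n + x := by linarith [neg_abs_le x]
  rw [norm_inv, norm_inv, Real.norm_of_nonneg hn.le, Real.norm_of_nonneg (by linarith)]
  calc ((n : ℝ) + x)⁻¹ ≤ ((n : ℝ) / 2)⁻¹ := inv_anti₀ (by positivity) hnx
    _ = 2 * (n : ℝ)⁻¹ := by rw [inv_div, div_eq_mul_inv]

lemma isBigO_inv_add_const_sub_inv (x : ℝ) :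
    (fun n : ℕ => ((n : ℝ) + x)⁻¹ - (n : ℝ)⁻¹) =O[atTop]
      fun n => ((n : ℝ) ^ 2)⁻¹ := by
  have h : (fun n : ℕ => -x * (((n : ℝ) + x)⁻¹ * (n : ℝ)⁻¹)) =O[atTop]
      fun n => ((n : ℝ) ^ 2)⁻¹ := by
    simpa only [sq, mul_inv] using
      ((isBigO_inv_add_const x).mul (isBigO_refl _ _)).const_mul_left (-x)
  refine h.congr' ?_ EventuallyEq.rfl
  filter_upwards [eventually_gt_atTop 0, eventually_gt_atTop ⌈|x|⌉₊] with n hn hnx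
  have hn : (n : ℝ) ≠ 0 := by positivity
  have hx : (n : ℝ) + x ≠ 0 := by
    have : |x| < n := (Nat.le_ceil _).trans_lt (by exact_mod_cast hnx)
    linarith [neg_abs_le x]
  field_simp
  ring

lemma isBigO_log_one_add_div_sub_mul_log_one_add_inv (α x : ℝ) :
    (fun n : ℕ => log (1 + α / (n + x)) - α * log (1 + (n : ℝ)⁻¹)) =O[atTop]
      fun n => ((n : ℝ) ^ 2)⁻¹ := by
  have ha := isBigO_log_one_add_sub_self_of_isBigO_inv
    ((isBigO_inv_add_const x).const_mul_left α)
  have hb := isBigO_log_one_add_sub_self_of_isBigO_inv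
    (isBigO_refl (fun n : ℕ => (n : ℝ)⁻¹) atTop)
  refine ((ha.sub (hb.const_mul_left α)).add
    ((isBigO_inv_add_const_sub_inv x).const_mul_left α)).congr_left fun n => ?_
  rw [div_eq_mul_inv]
  ring

lemma tendsto_of_summable_succ_sub {f : ℕ → ℝ} (h : Summable fun n => f (n + 1) - f n) :
    Tendsto f atTop (𝓝 (f 0 + ∑' n, (f (n + 1) - f n))) := by
  refine (h.hasSum.tendsto_sum_nat.const_add (f 0)).congr fun n => ?_
  rw [Finset.sum_range_sub]
  ring

theorem stmt_0_general (α x : ℝ) (k : ℕ) (r : ℕ → ℝ)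
    (hpos : ∀ n, k ≤ n → 0 < r n)
    (hrec : ∀ n, k ≤ n → r (n + 1) = r n * (1 + α / ((n : ℝ) + x))) :
    ∃ L : ℝ, 0 < L ∧ Tendsto (fun n : ℕ => r n / (n : ℝ) ^ α) atTop (nhds L) := by
  set f : ℕ → ℝ := fun n => log (r n) - α * log n
  have hstep : (fun n : ℕ => log (1 + α / (n + x)) - α * log (1 + (n : ℝ)⁻¹)) =ᶠ[atTop]
      fun n => f (n + 1) - f n := by
    filter_upwards [eventually_ge_atTop k, eventually_gt_atTop 0] with n hk hn
    have hn : (n : ℝ) ≠ 0 := by positivity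
    have hfactor : 1 + α / ((n : ℝ) + x) ≠ 0 := by
      have := hpos (n + 1) (by omega)
      rw [hrec n hk] at this
      exact right_ne_zero_of_mul this.ne'
    have hlog : log (1 + (n : ℝ)⁻¹) = log (n + 1 : ℕ) - log n := by
      rw [← log_div (by positivity) hn]
      congr 1
      field_simp
      push_cast; ring
    simp only [f, hrec n hk, log_mul (hpos n hk).ne' hfactor, hlog]
    ring
  have hsum : Summable fun n => f (n + 1) - f n :=
    summable_of_isBigO_nat (summable_nat_pow_inv.mpr one_lt_two)
      ((isBigO_log_one_add_div_sub_mul_log_one_add_inv α x).congr' hstep EventuallyEq.rfl)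
  refine ⟨_, exp_pos _,
    ((continuous_exp.tendsto _).comp (tendsto_of_summable_succ_sub hsum)).congr' ?_⟩
  filter_upwards [eventually_ge_atTop k, eventually_gt_atTop 0] with n hk hn
  simp only [Function.comp, f, exp_sub, exp_log (hpos n hk),
    rpow_def_of_pos (by positivity : (0 : ℝ) < n), mul_comm]

/-- Lemma 3.1 (Galashin): if positive reals satisfy the recurrence
`r (n+1) = r n * (1 + α/(n+x))` for `n ≥ k`, then `r n / n^α` has a positive limit. -/
theorem stmt_0 (α x : ℝ) (k : ℕ) (r : ℕ → ℝ) (hα : 0 < α) (hk : 0 < k)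
    (hpos : ∀ n, k ≤ n → 0 < r n)
    (hx : ∀ n, k ≤ n → 0 < (n : ℝ) + x)
    (hrec : ∀ n, k ≤ n → r (n + 1) = r n * (1 + α / ((n : ℝ) + x))) :
    ∃ L : ℝ, 0 < L ∧ Tendsto (fun n : ℕ => r n / (n : ℝ) ^ α) atTop (nhds L) :=
  stmt_0_general α x k r hpos hrec
end

section
/- Let (S_n)_{n≥0} be a random walk with S_0 = 0 and independent increments, each centered (mean zero) and bounded in absolute value by 1. For any α > 0 there exists c > 0 such that for every m ≥ 0, the probability that there exists n ≥ 1 with S_n > αn + m is at most c·exp(-αm/c). -/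
/-!
By Hoeffding's lemma every increment is sub-Gaussian with parameter 1, so Hoeffding's inequality
gives `P(S_n ≥ αn + m) ≤ exp (-(αn + m)² / 2n) ≤ e^{-αm} · (e^{-α²/2})^n`. A union bound over
`n` and the geometric series give the claim with `c = (1 - e^{-α²/2})⁻¹ ≥ 1`.
-/

open MeasureTheory ProbabilityTheory Real Finset
open scoped NNReal

lemma measure_iUnion_le_ofReal_of_le_geometric {Ω : Type*} [MeasurableSpace Ω] {μ : Measure Ω}
    {A : ℕ → Set Ω} {C r : ℝ} (hC : 0 ≤ C) (hr₀ : 0 ≤ r) (hr₁ : r < 1)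
    (hA : ∀ n, μ (A n) ≤ ENNReal.ofReal (C * r ^ n)) :
    μ (⋃ n, A n) ≤ ENNReal.ofReal (C * (1 - r)⁻¹) := by
  have hsum : HasSum (fun n ↦ C * r ^ n) (C * (1 - r)⁻¹) :=
    (hasSum_geometric_of_lt_one hr₀ hr₁).mul_left C
  calc μ (⋃ n, A n) ≤ ∑' n, μ (A n) := measure_iUnion_le A
    _ ≤ ∑' n, ENNReal.ofReal (C * r ^ n) := ENNReal.tsum_le_tsum hA
    _ = ENNReal.ofReal (C * (1 - r)⁻¹) := by
      rw [← ENNReal.ofReal_tsum_of_nonneg (fun n ↦ by positivity) hsum.summable, hsum.tsum_eq]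

section

variable {Ω : Type*} [MeasurableSpace Ω] {μ : Measure Ω}

lemma hasSubgaussianMGF_one_of_abs_le_one [IsProbabilityMeasure μ] {Y : Ω → ℝ}
    (hm : AEMeasurable Y μ) (hb : ∀ᵐ ω ∂μ, |Y ω| ≤ 1) (hc : μ[Y] = 0) :
    HasSubgaussianMGF Y 1 μ := by
  have h := hasSubgaussianMGF_of_mem_Icc_of_integral_eq_zero (a := -1) (b := 1) hm
    (hb.mono fun ω hω ↦ abs_le.mp hω) hc
  convert h
  norm_num

lemma measureReal_sum_range_ge_mul_add_le {X : ℕ → Ω → ℝ} (hindep : iIndepFun X μ) {c : ℝ≥0}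
    (hX : ∀ i, HasSubgaussianMGF (X i) c μ) {α m : ℝ} (hα : 0 ≤ α) (hm : 0 ≤ m) {n : ℕ}
    (hn : n ≠ 0) :
    μ.real {ω | α * n + m ≤ ∑ i ∈ range n, X i ω}
      ≤ exp (-(α * m) / c) * exp (-α ^ 2 / (2 * c)) ^ n := by
  have hn' : (0 : ℝ) < n := by positivity
  calc μ.real {ω | α * n + m ≤ ∑ i ∈ range n, X i ω}
      ≤ exp (-(α * n + m) ^ 2 / (2 * n * c)) :=
        HasSubgaussianMGF.measure_sum_range_ge_le_of_iIndepFun hindep (fun i _ ↦ hX i)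
          (by positivity)
    _ ≤ exp (-(α ^ 2 * n ^ 2 + 2 * α * m * n) / (2 * n * c)) := by
        gcongr
        nlinarith
    _ = exp (-(α * m) / c) * exp (-α ^ 2 / (2 * c)) ^ n := by
        rw [← exp_nat_mul, ← exp_add]
        congr 1
        rcases eq_or_ne (c : ℝ) 0 with hc | hc
        · simp [hc]
        · field_simp
          ring

end

/-- Lemma 5.3: for a random walk with independent centered increments bounded by 1,
for any `α > 0` there is `c > 0` so that for all `m ≥ 0`,
`P(∃ n ≥ 1, S_n > α n + m) ≤ c exp(-α m / c)`. -/
theorem stmt_8 {Ω : Type*} [MeasurableSpace Ω] (μ : Measure Ω) [IsProbabilityMeasure μ]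
    (X : ℕ → Ω → ℝ) (hmeas : ∀ i, Measurable (X i))
    (hindep : iIndepFun X μ)
    (hcent : ∀ i, μ[X i] = 0)
    (hbdd : ∀ i, ∀ᵐ ω ∂μ, |X i ω| ≤ 1)
    (S : ℕ → Ω → ℝ) (hS : ∀ n ω, S n ω = ∑ i ∈ Finset.range n, X i ω)
    (α : ℝ) (hα : 0 < α) :
    ∃ c : ℝ, 0 < c ∧ ∀ m : ℝ, 0 ≤ m →
      μ {ω | ∃ n : ℕ, 1 ≤ n ∧ S n ω > α * n + m}
        ≤ ENNReal.ofReal (c * Real.exp (-(α * m) / c)) := by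
  set r := exp (-α ^ 2 / 2)
  have hr₀ : 0 < r := exp_pos _
  have hr₁ : r < 1 := exp_lt_one_iff.mpr (by nlinarith)
  have hc : 1 ≤ (1 - r)⁻¹ := (one_le_inv₀ (by linarith)).mpr (by linarith)
  refine ⟨(1 - r)⁻¹, by positivity, fun m hm ↦ ?_⟩
  have hsubG i : HasSubgaussianMGF (X i) 1 μ :=
    hasSubgaussianMGF_one_of_abs_le_one (hmeas i).aemeasurable (hbdd i) (hcent i)
  have htail (n : ℕ) :
      μ {ω | 1 ≤ n ∧ S n ω > α * n + m} ≤ ENNReal.ofReal (exp (-(α * m)) * r ^ n) := by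
    rcases Nat.eq_zero_or_pos n with rfl | hn
    · simp
    calc μ {ω | 1 ≤ n ∧ S n ω > α * n + m}
        ≤ μ {ω | α * n + m ≤ ∑ i ∈ range n, X i ω} :=
          measure_mono fun ω hω ↦ (hS n ω ▸ hω.2).le
      _ ≤ _ := by
        rw [← ofReal_measureReal]
        refine ENNReal.ofReal_le_ofReal ?_
        simpa using measureReal_sum_range_ge_mul_add_le hindep hsubG hα.le hm hn.ne'
  calc μ {ω | ∃ n : ℕ, 1 ≤ n ∧ S n ω > α * n + m}
      = μ (⋃ n, {ω | 1 ≤ n ∧ S n ω > α * n + m}) := by rw [Set.ofPred_exists]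
    _ ≤ ENNReal.ofReal (exp (-(α * m)) * (1 - r)⁻¹) :=
        measure_iUnion_le_ofReal_of_le_geometric (exp_pos _).le hr₀.le hr₁ htail
    _ ≤ ENNReal.ofReal ((1 - r)⁻¹ * exp (-(α * m) / (1 - r)⁻¹)) := by
        rw [mul_comm]
        gcongr
        rw [neg_div]
        exact neg_le_neg (div_le_self (by positivity) hc)
end

section
/- Consider the random walk T_n = (A_n, B_n) on Z² starting from (A_0, B_0) with A_0 > B_0 ≥ 1, which at each step increments A by 1 with probability A_n/(A_n+B_n) and B by 1 with probability B_n/(A_n+B_n). Then almost surely T_n visits the diagonal {(x,x)} only finitely many times. -/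
/-!
`A n / (s + n)` is a bounded martingale, hence converges almost surely, and a visit to the
diagonal means exactly that this ratio equals `1 / 2`, so infinitely many visits force the limit
to be `1 / 2`. That has probability zero because the law of `A n` is spread out: the one-step
recursion for its point masses shows by induction that each of them is at most
`(s - 1) / (s - 1 + n)`, so for large `n` the ratio lies within `δ` of `1 / 2` with probability
`O(δ)`.
-/

open MeasureTheory Filter Topology

section

variable {Ω : Type*} {m m0 : MeasurableSpace Ω} {μ : Measure Ω}

theorem measureReal_inter_eq_setIntegral_of_condExp_indicator [IsFiniteMeasure μ]
    (hm : m ≤ m0) {R S : Set Ω} {g : Ω → ℝ} (hR : MeasurableSet R) (hS : MeasurableSet[m] S)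
    (hg : μ[R.indicator (fun _ => (1 : ℝ)) | m] =ᵐ[μ] g) :
    μ.real (S ∩ R) = ∫ ω in S, g ω ∂μ := by
  rw [← setIntegral_congr_ae (hm S hS) (hg.mono fun _ h _ => h),
    setIntegral_condExp hm ((integrable_const _).indicator hR) hS,
    setIntegral_indicator hR, setIntegral_const, smul_eq_mul, mul_one]

theorem measureReal_natCast_mem_Icc_le [IsFiniteMeasure μ] {X : Ω → ℕ} {q a b : ℝ}
    (hq : ∀ j, μ.real {ω | X ω = j} ≤ q) (hab : a ≤ b) :
    μ.real {ω | (X ω : ℝ) ∈ Set.Icc a b} ≤ (b - a + 1) * q := by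
  set F := Finset.Icc ⌈a⌉₊ ⌊b⌋₊
  have hsub : {ω | (X ω : ℝ) ∈ Set.Icc a b} ⊆ ⋃ j ∈ F, {ω | X ω = j} := fun ω ⟨ha, hb⟩ =>
    Set.mem_biUnion (Finset.mem_Icc.2 ⟨Nat.ceil_le.2 ha, Nat.le_floor hb⟩) rfl
  have hcard : (F.card : ℝ) ≤ b - a + 1 := by
    rw [Nat.card_Icc]
    rcases le_or_gt ⌈a⌉₊ (⌊b⌋₊ + 1) with hle | hlt
    · rw [Nat.cast_sub hle]
      push_cast
      have hceil := Nat.le_ceil a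
      rcases le_or_gt 0 b with hb | hb
      · linarith [Nat.floor_le hb]
      · rw [Nat.floor_eq_zero.2 (hb.trans one_pos), Nat.ceil_eq_zero.2 (hab.trans hb.le)]
        push_cast
        linarith
    · rw [Nat.sub_eq_zero_of_le hlt.le]
      push_cast
      linarith
  calc μ.real {ω | (X ω : ℝ) ∈ Set.Icc a b}
      ≤ ∑ j ∈ F, μ.real {ω | X ω = j} :=
        (measureReal_mono hsub (measure_ne_top _ _)).trans (measureReal_biUnion_finset_le _ _)
    _ ≤ F.card • q := Finset.sum_le_card_nsmul _ _ _ fun j _ => hq j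
    _ ≤ (b - a + 1) * q := by
        rw [nsmul_eq_mul]
        exact mul_le_mul_of_nonneg_right hcard (measureReal_nonneg.trans (hq 0))

theorem ae_not_tendsto_of_frequently_measureReal_le [IsFiniteMeasure μ] {X : ℕ → Ω → ℝ} {c : ℝ}
    (h : ∀ η > 0, ∃ δ > 0, ∃ᶠ n in atTop, μ.real {ω | |X n ω - c| ≤ δ} ≤ η) :
    ∀ᵐ ω ∂μ, ¬ Tendsto (fun n => X n ω) atTop (𝓝 c) := by
  simp only [ae_iff, not_not]
  refine le_antisymm (ENNReal.le_of_forall_pos_le_add fun η hη _ => ?_) bot_le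
  obtain ⟨δ, hδ, hfreq⟩ := h η hη
  set E : ℕ → Set Ω := fun N => {ω | ∀ n ≥ N, |X n ω - c| ≤ δ}
  have hE : Monotone E := fun N N' hNN' ω hω n hn => hω n (hNN'.trans hn)
  have hsub : {ω | Tendsto (fun n => X n ω) atTop (𝓝 c)} ⊆ ⋃ N, E N := fun ω hω => by
    obtain ⟨N, hN⟩ := Metric.tendsto_atTop.1 hω δ hδ
    exact Set.mem_iUnion.2 ⟨N, fun n hn => (hN n hn).le⟩
  have hEle : ∀ N, μ (E N) ≤ η := fun N => by
    obtain ⟨n, hnN, hn⟩ := (frequently_atTop.1 hfreq) N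
    rw [← ENNReal.ofReal_coe_nnreal, ← ofReal_measureReal]
    exact ENNReal.ofReal_le_ofReal ((measureReal_mono fun ω (hω : ω ∈ E N) => hω n hnN).trans hn)
  calc μ {ω | Tendsto (fun n => X n ω) atTop (𝓝 c)} ≤ μ (⋃ N, E N) := measure_mono hsub
    _ = ⨆ N, μ (E N) := hE.measure_iUnion
    _ ≤ 0 + η := by rw [zero_add]; exact iSup_le hEle

end

/-- `A n` counts the balls of the first colour after `n` draws, when the urn holds `s + n` balls;
each draw returns the ball together with a new one of the same colour. -/
structure IsPolyaUrn {Ω : Type*} {m0 : MeasurableSpace Ω} (μ : Measure Ω) (ℱ : Filtration ℕ m0)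
    (A : ℕ → Ω → ℕ) (s : ℕ) : Prop where
  measurable : ∀ n, Measurable[ℱ n] (A n)
  step : ∀ n ω, A (n + 1) ω = A n ω ∨ A (n + 1) ω = A n ω + 1
  condExp_draw : ∀ n, μ[{ω | A (n + 1) ω = A n ω + 1}.indicator (fun _ => (1 : ℝ)) | ℱ n]
    =ᵐ[μ] fun ω => (A n ω : ℝ) / (s + n)

namespace IsPolyaUrn

variable {Ω : Type*} {m0 : MeasurableSpace Ω} {μ : Measure Ω} {ℱ : Filtration ℕ m0}
  {A : ℕ → Ω → ℕ} {s a : ℕ}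

theorem le_apply (h : IsPolyaUrn μ ℱ A s) (n : ℕ) (ω : Ω) : A 0 ω ≤ A n ω := by
  induction n with
  | zero => rfl
  | succ n ih => rcases h.step n ω with h' | h' <;> omega

theorem apply_le (h : IsPolyaUrn μ ℱ A s) (n : ℕ) (ω : Ω) : A n ω ≤ A 0 ω + n := by
  induction n with
  | zero => rfl
  | succ n ih => rcases h.step n ω with h' | h' <;> omega

theorem measurable_apply (h : IsPolyaUrn μ ℱ A s) (n : ℕ) : Measurable (A n) :=
  (h.measurable n).mono (ℱ.le n) le_rfl

theorem measurableSet_draw (h : IsPolyaUrn μ ℱ A s) (n : ℕ) :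
    MeasurableSet {ω | A (n + 1) ω = A n ω + 1} :=
  measurableSet_eq_fun (h.measurable_apply (n + 1)) ((h.measurable_apply n).add_const 1)

theorem integrable_apply [IsFiniteMeasure μ] (h : IsPolyaUrn μ ℱ A s) (hA0 : ∀ ω, A 0 ω = a)
    (n : ℕ) : Integrable (fun ω => (A n ω : ℝ)) μ := by
  refine (integrable_const ((a + n : ℕ) : ℝ)).mono'
    (measurable_from_top.comp (h.measurable_apply n)).aestronglyMeasurable (ae_of_all _ ?_)
  intro ω
  rw [Real.norm_natCast, Nat.cast_le, ← hA0 ω]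
  exact h.apply_le n ω

theorem measureReal_inter_draw [IsFiniteMeasure μ] (h : IsPolyaUrn μ ℱ A s) (n j : ℕ) :
    μ.real ({ω | A n ω = j} ∩ {ω | A (n + 1) ω = A n ω + 1})
      = j / (s + n) * μ.real {ω | A n ω = j} := by
  have hS : MeasurableSet[ℱ n] {ω | A n ω = j} := h.measurable n (measurableSet_singleton j)
  rw [measureReal_inter_eq_setIntegral_of_condExp_indicator (ℱ.le n) (h.measurableSet_draw n) hS
    (h.condExp_draw n),
    setIntegral_congr_fun (ℱ.le n _ hS) (g := fun _ => (j : ℝ) / (s + n))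
      fun ω hω => by rw [hω.out],
    setIntegral_const, smul_eq_mul, mul_comm]

theorem measureReal_succ_eq [IsFiniteMeasure μ] (h : IsPolyaUrn μ ℱ A s) (n j : ℕ) :
    μ.real {ω | A (n + 1) ω = j + 1} = (1 - (j + 1) / (s + n)) * μ.real {ω | A n ω = j + 1}
      + j / (s + n) * μ.real {ω | A n ω = j} := by
  set D := {ω | A (n + 1) ω = A n ω + 1}
  have hsplit : {ω | A (n + 1) ω = j + 1}
      = ({ω | A n ω = j + 1} \ D) ∪ ({ω | A n ω = j} ∩ D) := by
    ext ω
    simp only [Set.mem_ofPred_eq, Set.mem_union, Set.mem_sdiff, Set.mem_inter_iff, D]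
    rcases h.step n ω with h' | h' <;> omega
  have hdisj : Disjoint ({ω | A n ω = j + 1} \ D) ({ω | A n ω = j} ∩ D) :=
    Set.disjoint_left.2 fun _ h₁ h₂ => h₁.2 h₂.2
  have hstay := measureReal_inter_add_sdiff (μ := μ) (s := {ω | A n ω = j + 1})
    (h.measurableSet_draw n)
  rw [hsplit, measureReal_union hdisj
    ((h.measurable_apply n (measurableSet_singleton j)).inter (h.measurableSet_draw n)),
    h.measureReal_inter_draw]
  rw [h.measureReal_inter_draw] at hstay
  push_cast at hstay
  linarith

theorem measureReal_apply_eq_le [IsProbabilityMeasure μ] (h : IsPolyaUrn μ ℱ A s)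
    (hA0 : ∀ ω, A 0 ω = a) (ha : 1 ≤ a) (has : a < s) (n j : ℕ) :
    μ.real {ω | A n ω = j} ≤ (s - 1) / (s - 1 + n) := by
  have hs : (2 : ℝ) ≤ s := by exact_mod_cast (by omega : 2 ≤ s)
  have hempty : ∀ n j, (j = 0 ∨ a + n < j) → μ.real {ω | A n ω = j} = 0 := fun n j hj => by
    convert measureReal_empty (μ := μ)
    refine Set.eq_empty_of_forall_notMem fun ω (hω : A n ω = j) => ?_
    have := h.le_apply n ω
    have := h.apply_le n ω
    rw [hA0] at *
    omega
  induction n generalizing j with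
  | zero =>
    rw [Nat.cast_zero, add_zero, div_self (by linarith)]
    exact measureReal_le_one
  | succ n ih =>
    have hsn : (0 : ℝ) < s - 1 + n := by linarith [(n.cast_nonneg : (0 : ℝ) ≤ n)]
    have hc : 0 ≤ ((s : ℝ) - 1) / (s - 1 + n) := div_nonneg (by linarith) hsn.le
    rcases j with _ | j
    · rw [hempty _ _ (.inl rfl)]
      exact div_nonneg (by linarith) (by push_cast; linarith)
    by_cases hj : j + 1 ≤ s + n
    · have hjR : (j : ℝ) + 1 ≤ s + n := by exact_mod_cast hj
      have hsn' : (s : ℝ) + n ≠ 0 := by linarith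
      have hstay : 0 ≤ 1 - ((j : ℝ) + 1) / (s + n) := by
        rw [sub_nonneg, div_le_one (by linarith)]
        exact hjR
      calc μ.real {ω | A (n + 1) ω = j + 1}
          = (1 - (j + 1) / (s + n)) * μ.real {ω | A n ω = j + 1}
            + j / (s + n) * μ.real {ω | A n ω = j} := h.measureReal_succ_eq n j
        _ ≤ (1 - (j + 1) / (s + n)) * ((s - 1) / (s - 1 + n))
            + j / (s + n) * ((s - 1) / (s - 1 + n)) := by gcongr <;> exact ih _
        _ = (s - 1) / (s - 1 + (n + 1 : ℕ)) := by
          rw [show (s : ℝ) - 1 + (n + 1 : ℕ) = s + n by push_cast; ring]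
          field_simp
          ring
    · rw [hempty _ _ (.inr (by omega))]
      exact div_nonneg (by linarith) (by push_cast; linarith)

theorem martingale [IsFiniteMeasure μ] (h : IsPolyaUrn μ ℱ A s) (hA0 : ∀ ω, A 0 ω = a)
    (hs : 0 < s) : Martingale (fun n ω => (A n ω : ℝ) / (s + n)) ℱ μ := by
  have hAsm : ∀ n, StronglyMeasurable[ℱ n] (fun ω => (A n ω : ℝ)) := fun n =>
    (measurable_from_top.comp (h.measurable n)).stronglyMeasurable
  refine martingale_nat (fun n => ((hAsm n).measurable.div_const _).stronglyMeasurable)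
    (fun n => (h.integrable_apply hA0 n).div_const _) fun n => ?_
  set D := {ω | A (n + 1) ω = A n ω + 1}
  have hsn : (s : ℝ) + n ≠ 0 := by positivity
  have hnext : (fun ω => (A (n + 1) ω : ℝ) / (s + (n + 1 : ℕ)))
      = ((s : ℝ) + n + 1)⁻¹ • ((fun ω => (A n ω : ℝ)) + D.indicator (fun _ => (1 : ℝ))) := by
    funext ω
    rcases h.step n ω with h' | h'
    · simp [D, h', div_eq_inv_mul, add_assoc]
    · simp [D, h', div_eq_inv_mul, add_assoc]
  have hA : μ[fun ω => (A n ω : ℝ) | ℱ n] = fun ω => (A n ω : ℝ) :=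
    condExp_of_stronglyMeasurable (ℱ.le n) (hAsm n) (h.integrable_apply hA0 n)
  show _ =ᵐ[μ] μ[fun ω => (A (n + 1) ω : ℝ) / (s + (n + 1 : ℕ)) | ℱ n]
  rw [hnext]
  filter_upwards [condExp_smul (m := ℱ n) (μ := μ) ((s : ℝ) + n + 1)⁻¹
      ((fun ω => (A n ω : ℝ)) + D.indicator (fun _ => (1 : ℝ))),
    condExp_add (h.integrable_apply hA0 n)
      ((integrable_const 1).indicator (h.measurableSet_draw n)) (ℱ n),
    h.condExp_draw n] with ω hsmul hadd hdraw
  rw [hsmul, Pi.smul_apply, hadd, Pi.add_apply, hA, hdraw, smul_eq_mul]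
  field_simp

theorem ae_exists_tendsto [IsFiniteMeasure μ] (h : IsPolyaUrn μ ℱ A s)
    (hA0 : ∀ ω, A 0 ω = a) (hs : 0 < s) (has : a ≤ s) :
    ∀ᵐ ω ∂μ, ∃ c, Tendsto (fun n => (A n ω : ℝ) / (s + n)) atTop (𝓝 c) := by
  refine (h.martingale hA0 hs).submartingale.exists_ae_tendsto_of_bdd
    (R := measureUnivNNReal μ) fun n => ?_
  have hbound : ∀ ω, ‖(A n ω : ℝ) / (s + n)‖ ≤ 1 := fun ω => by
    rw [Real.norm_of_nonneg (by positivity), div_le_one (by positivity)]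
    have := h.apply_le n ω
    rw [hA0] at this
    exact_mod_cast (by omega : A n ω ≤ s + n)
  simpa using eLpNorm_le_of_ae_bound (p := 1) (ae_of_all μ hbound)

theorem measureReal_abs_sub_half_le [IsProbabilityMeasure μ] (h : IsPolyaUrn μ ℱ A s)
    (hA0 : ∀ ω, A 0 ω = a) (ha : 1 ≤ a) (has : a < s) (n : ℕ) {δ : ℝ} (hδ : 0 ≤ δ) :
    μ.real {ω | |(A n ω : ℝ) / (s + n) - 1 / 2| ≤ δ}
      ≤ (2 * δ * (s + n) + 1) * ((s - 1) / (s - 1 + n)) := by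
  have hsn : (0 : ℝ) < s + n := by norm_cast; omega
  have hset : {ω | |(A n ω : ℝ) / (s + n) - 1 / 2| ≤ δ}
      = {ω | (A n ω : ℝ) ∈ Set.Icc ((1 / 2 - δ) * (s + n)) ((1 / 2 + δ) * (s + n))} := by
    ext ω
    have : (A n ω : ℝ) / (s + n) - 1 / 2 = ((A n ω : ℝ) - (s + n) / 2) / (s + n) := by
      field_simp
    simp only [Set.mem_ofPred_eq, Set.mem_Icc]
    rw [this, abs_div, abs_of_pos hsn, div_le_iff₀ hsn, abs_le]
    constructor <;> rintro ⟨h₁, h₂⟩ <;> constructor <;> linarith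
  rw [hset]
  refine (measureReal_natCast_mem_Icc_le (h.measureReal_apply_eq_le hA0 ha has n)
    (by nlinarith)).trans (le_of_eq (by ring))

theorem ae_not_tendsto_half [IsProbabilityMeasure μ] (h : IsPolyaUrn μ ℱ A s)
    (hA0 : ∀ ω, A 0 ω = a) (ha : 1 ≤ a) (has : a < s) :
    ∀ᵐ ω ∂μ, ¬ Tendsto (fun n => (A n ω : ℝ) / (s + n)) atTop (𝓝 (1 / 2)) := by
  have hs : (2 : ℝ) ≤ s := by exact_mod_cast (by omega : 2 ≤ s)
  refine ae_not_tendsto_of_frequently_measureReal_le fun η hη => ?_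
  set δ := η / (5 * (s - 1)) with hδ_def
  have hδ : 0 < δ := div_pos hη (by linarith)
  refine ⟨δ, hδ, (eventually_ge_atTop ⌈δ⁻¹⌉₊).frequently.mono fun n hn => ?_⟩
  have hδn : 1 ≤ δ * n :=
    (mul_inv_cancel₀ hδ.ne').symm.trans_le (mul_le_mul_of_nonneg_left (Nat.ceil_le.1 hn) hδ.le)
  have hsn : (0 : ℝ) < s - 1 + n := by linarith [(n.cast_nonneg : (0 : ℝ) ≤ n)]
  calc μ.real {ω | |(A n ω : ℝ) / (s + n) - 1 / 2| ≤ δ}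
      ≤ (2 * δ * (s + n) + 1) * ((s - 1) / (s - 1 + n)) :=
        h.measureReal_abs_sub_half_le hA0 ha has n hδ.le
    _ ≤ 5 * δ * (s - 1 + n) * ((s - 1) / (s - 1 + n)) := by
        gcongr
        · exact div_nonneg (by linarith) hsn.le
        · nlinarith
    _ = η := by
        have : (s : ℝ) - 1 ≠ 0 := by linarith
        rw [hδ_def]
        field_simp

theorem ae_finite_setOf_two_mul_eq [IsProbabilityMeasure μ] (h : IsPolyaUrn μ ℱ A s)
    (hA0 : ∀ ω, A 0 ω = a) (ha : 1 ≤ a) (has : a < s) :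
    ∀ᵐ ω ∂μ, {n | 2 * A n ω = s + n}.Finite := by
  filter_upwards [h.ae_exists_tendsto hA0 (by omega) has.le, h.ae_not_tendsto_half hA0 ha has]
    with ω ⟨c, hc⟩ hnot
  by_contra hinf
  have hhalf : ∃ᶠ n in atTop, (A n ω : ℝ) / (s + n) = 1 / 2 :=
    (Nat.frequently_atTop_iff_infinite.2 hinf).mono fun n (hn : 2 * A n ω = s + n) => by
      rw [div_eq_iff (by norm_cast; omega)]
      have : (2 * A n ω : ℝ) = s + n := by exact_mod_cast hn
      linarith
  exact hnot (tendsto_nhds_unique_of_frequently_eq hc tendsto_const_nhds hhalf ▸ hc)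

end IsPolyaUrn

theorem stmt_14_general {Ω : Type*} {m0 : MeasurableSpace Ω} (μ : Measure Ω)
    [IsProbabilityMeasure μ] (ℱ : Filtration ℕ m0)
    (A B : ℕ → Ω → ℕ)
    (hAm : ∀ n, Measurable[ℱ n] (A n))
    (a₀ b₀ : ℕ) (hb₀ : 1 ≤ b₀) (hab : b₀ < a₀)
    (hA0 : ∀ ω, A 0 ω = a₀) (hB0 : ∀ ω, B 0 ω = b₀)
    (hstep : ∀ n ω, (A (n + 1) ω = A n ω + 1 ∧ B (n + 1) ω = B n ω) ∨
      (A (n + 1) ω = A n ω ∧ B (n + 1) ω = B n ω + 1))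
    (hcond : ∀ n : ℕ,
      (μ[({ω' | A (n + 1) ω' = A n ω' + 1}).indicator (fun _ => (1 : ℝ)) | ℱ n])
        =ᵐ[μ] fun ω => (A n ω : ℝ) / ((A n ω : ℝ) + (B n ω : ℝ))) :
    ∀ᵐ ω ∂μ, {n : ℕ | A n ω = B n ω}.Finite := by
  have htotal : ∀ n ω, A n ω + B n ω = a₀ + b₀ + n := by
    intro n ω
    induction n with
    | zero => rw [hA0, hB0, add_zero]
    | succ n ih => rcases hstep n ω with h | h <;> omega
  have hurn : IsPolyaUrn μ ℱ A (a₀ + b₀) := by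
    refine ⟨hAm, fun n ω => by rcases hstep n ω with h | h <;> omega, fun n => ?_⟩
    refine (hcond n).trans (.of_eq (funext fun ω => ?_))
    rw [← Nat.cast_add, htotal, Nat.cast_add, Nat.cast_add]
  filter_upwards [hurn.ae_finite_setOf_two_mul_eq hA0 (by omega) (by omega)] with ω hfin
  exact hfin.subset fun n (hn : A n ω = B n ω) => show 2 * A n ω = a₀ + b₀ + n by
    have := htotal n ω
    omega

/-- The Pólya-urn random walk `(A_n, B_n)` started from `A_0 > B_0 ≥ 1` visits the
diagonal `A_n = B_n` only finitely many times, almost surely. -/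
theorem stmt_14 {Ω : Type*} {m0 : MeasurableSpace Ω} (μ : Measure Ω)
    [IsProbabilityMeasure μ] (ℱ : Filtration ℕ m0)
    (A B : ℕ → Ω → ℕ)
    (hAm : ∀ n, Measurable[ℱ n] (A n)) (hBm : ∀ n, Measurable[ℱ n] (B n))
    (a₀ b₀ : ℕ) (hb₀ : 1 ≤ b₀) (hab : b₀ < a₀)
    (hA0 : ∀ ω, A 0 ω = a₀) (hB0 : ∀ ω, B 0 ω = b₀)
    (hstep : ∀ n ω, (A (n + 1) ω = A n ω + 1 ∧ B (n + 1) ω = B n ω) ∨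
      (A (n + 1) ω = A n ω ∧ B (n + 1) ω = B n ω + 1))
    (hcond : ∀ n : ℕ,
      (μ[({ω' | A (n + 1) ω' = A n ω' + 1}).indicator (fun _ => (1 : ℝ)) | ℱ n])
        =ᵐ[μ] fun ω => (A n ω : ℝ) / ((A n ω : ℝ) + (B n ω : ℝ))) :
    ∀ᵐ ω ∂μ, {n : ℕ | A n ω = B n ω}.Finite :=
  stmt_14_general μ ℱ A B hAm a₀ b₀ hb₀ hab hA0 hB0 hstep hcond
end
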